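/- For a median-of-pairwise-absolute-slopes estimator on n points, if at most m points are replaced arbitrarily with m(2n - m - 1)/2 < n(n-1)/4 (i.e., fewer than half the pairwise slopes involve a replaced point), then the estimate remains between the minimum and maximum absolute slopes of the unreplaced points; in particular, the asymptotic breakdown value is 1 - 1/√2. -/
import Mathlib

lemma two_mul_card_filter_lt {α : Type*} [LinearOrder α] (S : Finset α) :
    2 * ((S ×ˢ S).filter fun p => p.1 < p.2).card = S.card * S.card - S.card := by
  have h1 : ((S ×ˢ S).filter fun p => p.1 < p.2).card
      = ((S ×ˢ S).filter fun p => p.2 < p.1).card := by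
    refine Finset.card_bij' (fun p _ => p.swap) (fun p _ => p.swap) ?_ ?_
      (fun _ _ => rfl) (fun _ _ => rfl)
    · intro p hp
      simp only [Finset.mem_filter, Finset.mem_product] at hp ⊢
      exact ⟨⟨hp.1.2, hp.1.1⟩, hp.2⟩
    · intro p hp
      simp only [Finset.mem_filter, Finset.mem_product] at hp ⊢
      exact ⟨⟨hp.1.2, hp.1.1⟩, hp.2⟩
  have h2 : S.offDiag = ((S ×ˢ S).filter fun p => p.1 < p.2)
      ∪ ((S ×ˢ S).filter fun p => p.2 < p.1) := by
    ext p
    simp only [Finset.mem_offDiag, Finset.mem_union, Finset.mem_filter, Finset.mem_product]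
    constructor
    · rintro ⟨h1, h2, h3⟩
      rcases lt_or_gt_of_ne h3 with h | h
      · exact Or.inl ⟨⟨h1, h2⟩, h⟩
      · exact Or.inr ⟨⟨h1, h2⟩, h⟩
    · rintro (⟨⟨ha, hb⟩, h⟩ | ⟨⟨ha, hb⟩, h⟩)
      · exact ⟨ha, hb, ne_of_lt h⟩
      · exact ⟨ha, hb, ne_of_gt h⟩
  have hd : Disjoint ((S ×ˢ S).filter fun p => p.1 < p.2)
      ((S ×ˢ S).filter fun p => p.2 < p.1) := by
    rw [Finset.disjoint_left]
    intro p hp hq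
    simp only [Finset.mem_filter] at hp hq
    exact absurd hq.2 (not_lt.mpr hp.2.le)
  have := Finset.offDiag_card S
  rw [h2, Finset.card_union_of_disjoint hd, ← h1] at this
  omega

/-- if `m` points of the sample are replaced arbitrarily and the number
`m(2n - m - 1)/2` of corrupted pairwise slopes is less than `n(n-1)/4` (half of all
pairs), then the upper median of the absolute pairwise slopes of the corrupted data
stays between the minimum and maximum absolute slopes formed by the unreplaced
points. -/
theorem pb_median_breakdown (n : ℕ) (x y x' y' : Fin n → ℝ)
    (G : Finset (Fin n)) (m : ℕ) (hm : m = n - G.card)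
    (hgood : ∀ i ∈ G, x' i = x i ∧ y' i = y i)
    (hx' : ∀ i j : Fin n, i ≠ j → x' i ≠ x' j)
    (hbound : (m : ℝ) * (2 * (n : ℝ) - (m : ℝ) - 1) / 2 < (n : ℝ) * ((n : ℝ) - 1) / 4)
    (P : Finset (Fin n × Fin n))
    (hP : P = Finset.univ.filter (fun p : Fin n × Fin n => p.1 ∈ G ∧ p.2 ∈ G ∧ p.1 < p.2))
    (hPne : P.Nonempty)
    (K k : ℕ) (hK : K = n * (n - 1) / 2)
    (hk : k = if Even K then K / 2 + 1 else (K + 1) / 2)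
    (M : Multiset ℝ)
    (hM : M = (Finset.univ.filter (fun p : Fin n × Fin n => p.1 < p.2)).val.map
        (fun p => |(y' p.2 - y' p.1) / (x' p.2 - x' p.1)|)) :
    P.inf' hPne (fun p => |(y p.2 - y p.1) / (x p.2 - x p.1)|) ≤
        (M.sort (· ≤ ·)).getD (k - 1) 0 ∧
      (M.sort (· ≤ ·)).getD (k - 1) 0 ≤
        P.sup' hPne (fun p => |(y p.2 - y p.1) / (x p.2 - x p.1)|) := by
  set f : Fin n × Fin n → ℝ := fun p => |(y p.2 - y p.1) / (x p.2 - x p.1)| with hf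
  set f' : Fin n × Fin n → ℝ := fun p => |(y' p.2 - y' p.1) / (x' p.2 - x' p.1)| with hf'
  set A : Finset (Fin n × Fin n) :=
    Finset.univ.filter (fun p : Fin n × Fin n => p.1 < p.2) with hA
  set g := G.card with hg
  -- basic cardinalities
  have hgn : g ≤ n := by
    have := Finset.card_le_univ G
    simpa [hg] using this
  have hAeq : A = (Finset.univ ×ˢ Finset.univ).filter (fun p : Fin n × Fin n => p.1 < p.2) := by
    rw [hA, Finset.univ_product_univ]
  have h2A : 2 * A.card = n * n - n := by
    rw [hAeq, two_mul_card_filter_lt]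
    simp [Finset.card_univ]
  have hPeq : P = (G ×ˢ G).filter (fun p : Fin n × Fin n => p.1 < p.2) := by
    rw [hP]; ext p
    simp only [Finset.mem_filter, Finset.mem_product, Finset.mem_univ, true_and]
    tauto
  have h2P : 2 * P.card = g * g - g := by rw [hPeq, two_mul_card_filter_lt]
  have hmul : n * (n - 1) = n * n - n := by
    rw [← Nat.pred_eq_sub_one, Nat.mul_pred]
  have heven : Even (n * (n - 1)) := by
    rcases n with _ | s
    · simp
    · simpa [Nat.mul_comm] using Nat.even_mul_succ_self s
  have h2K : 2 * K = n * n - n := by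
    obtain ⟨r, hr⟩ := heven
    omega
  have hgg : g ≤ g * g := by nlinarith
  have hnn : n ≤ n * n := by nlinarith
  -- the key inequality K < 2 * P.card
  have hK2P : K < 2 * P.card := by
    have hmr : (m : ℝ) = (n : ℝ) - (g : ℝ) := by
      rw [hm]; push_cast [Nat.cast_sub hgn]; ring
    have hKr : 2 * (K : ℝ) = (n : ℝ) * (n : ℝ) - (n : ℝ) := by
      have h : ((2 * K : ℕ) : ℝ) = ((n * n - n : ℕ) : ℝ) := by rw [h2K]
      rw [Nat.cast_sub hnn] at h
      push_cast at h
      linarith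
    have hPr : 2 * (P.card : ℝ) = (g : ℝ) * (g : ℝ) - (g : ℝ) := by
      have h : ((2 * P.card : ℕ) : ℝ) = ((g * g - g : ℕ) : ℝ) := by rw [h2P]
      rw [Nat.cast_sub hgg] at h
      push_cast at h
      linarith
    have : (K : ℝ) < 2 * (P.card : ℝ) := by nlinarith [hbound, hmr, hKr, hPr]
    exact_mod_cast this
  have hPA : P ⊆ A := by
    rw [hP, hA]; intro p hp
    simp only [Finset.mem_filter, Finset.mem_univ, true_and] at hp ⊢
    exact hp.2.2
  have hAK : A.card = K := by
    have := Finset.card_le_card hPA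
    omega
  have hPpos : 1 ≤ P.card := Finset.card_pos.mpr hPne
  have hPK : P.card ≤ K := hAK ▸ Finset.card_le_card hPA
  have hkK : 1 ≤ k ∧ k ≤ K ∧ K + 1 ≤ 2 * k ∧ 2 * k ≤ K + 2 := by
    rcases Nat.even_or_odd K with hE | hO
    · rw [if_pos hE] at hk
      rw [Nat.even_iff] at hE
      omega
    · rw [if_neg (Nat.not_even_iff_odd.mpr hO)] at hk
      rw [Nat.odd_iff] at hO
      omega
  -- slopes of good pairs agree
  have hff' : ∀ q ∈ P, f' q = f q := by
    intro q hq
    rw [hP, Finset.mem_filter] at hq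
    obtain ⟨-, h1, h2, -⟩ := hq
    simp only [hf, hf', (hgood _ h1).1, (hgood _ h1).2, (hgood _ h2).1, (hgood _ h2).2]
  -- the sorted list
  set L := M.sort (· ≤ ·) with hL
  have hLM : (L : Multiset ℝ) = M := Multiset.sort_eq _ _
  have hlen : L.length = K := by
    rw [hL, Multiset.length_sort, hM, Multiset.card_map, ← Finset.card_def, hAK]
  have hsorted : L.Pairwise (· ≤ ·) := Multiset.pairwise_sort _ _
  have hks : k - 1 < L.length := by omega
  have hgetD : L.getD (k - 1) 0 = L[k - 1] := List.getD_eq_getElem L 0 hks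
  -- generic counting bound
  have hcount : ∀ (p : ℝ → Prop) (_ : DecidablePred p), (∀ q ∈ P, ¬ p (f' q)) →
      Multiset.countP p M ≤ K - P.card := by
    intro p hd hPnot
    rw [hM, Multiset.countP_map]
    have heq : (A.val.filter (fun a => p (f' a)))
        = (A.filter (fun a => p (f' a))).val := (Finset.filter_val _ _).symm
    rw [heq, ← Finset.card_def]
    have hsub : A.filter (fun a => p (f' a)) ⊆ A \ P := by
      intro q hq
      rw [Finset.mem_filter] at hq
      rw [Finset.mem_sdiff]
      exact ⟨hq.1, fun hqP => hPnot q hqP hq.2⟩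
    calc (A.filter (fun a => p (f' a))).card ≤ (A \ P).card := Finset.card_le_card hsub
      _ = A.card - P.card := Finset.card_sdiff_of_subset hPA
      _ = K - P.card := by rw [hAK]
  constructor
  · -- lower bound
    by_contra hcon
    push_neg at hcon
    rw [hgetD] at hcon
    set v := P.inf' hPne f with hv
    have hPnot : ∀ q ∈ P, ¬ (f' q < v) := by
      intro q hq
      rw [hff' q hq]
      exact not_lt.mpr (Finset.inf'_le f hq)
    have hub := hcount (fun a => a < v) (fun a => Real.decidableLT a v) hPnot
    -- lower bound on the count: the first k sorted elements are < v
    have hlow : k ≤ Multiset.countP (fun a => a < v) M := by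
      have hsubl : ((L.take k : List ℝ) : Multiset ℝ) ≤ M := by
        rw [← hLM]
        exact Multiset.coe_le.mpr (List.take_sublist k L).subperm
      have hall : ∀ a ∈ (L.take k : List ℝ), a < v := by
        intro a ha
        obtain ⟨i, hi, rfl⟩ := List.mem_iff_getElem.mp ha
        have hi' : i < k ∧ i < L.length := by
          rw [List.length_take] at hi; omega
        rw [List.getElem_take]
        have : L.get ⟨i, hi'.2⟩ ≤ L.get ⟨k - 1, hks⟩ := by
          apply hsorted.rel_get_of_le
          simp only [Fin.mk_le_mk]
          omega
        simp only [List.get_eq_getElem] at this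
        exact lt_of_le_of_lt this hcon
      have hcnt : Multiset.countP (fun a => a < v) ((L.take k : List ℝ) : Multiset ℝ)
          = Multiset.card ((L.take k : List ℝ) : Multiset ℝ) :=
        Multiset.countP_eq_card.mpr (by simpa using hall)
      have hlen' : Multiset.card ((L.take k : List ℝ) : Multiset ℝ) = k := by
        rw [Multiset.coe_card, List.length_take, hlen]
        omega
      calc k = Multiset.countP (fun a => a < v) ((L.take k : List ℝ) : Multiset ℝ) := by
              rw [hcnt, hlen']
        _ ≤ Multiset.countP (fun a => a < v) M := Multiset.countP_le_of_le _ hsubl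
    omega
  · -- upper bound
    by_contra hcon
    push_neg at hcon
    rw [hgetD] at hcon
    set v := P.sup' hPne f with hv
    have hPnot : ∀ q ∈ P, ¬ (v < f' q) := by
      intro q hq
      rw [hff' q hq]
      exact not_lt.mpr (Finset.le_sup' f hq)
    have hub := hcount (fun a => v < a) (fun a => Real.decidableLT v a) hPnot
    have hlow : K - (k - 1) ≤ Multiset.countP (fun a => v < a) M := by
      have hsubl : ((L.drop (k - 1) : List ℝ) : Multiset ℝ) ≤ M := by
        rw [← hLM]
        exact Multiset.coe_le.mpr (List.drop_sublist (k - 1) L).subperm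
      have hall : ∀ a ∈ (L.drop (k - 1) : List ℝ), v < a := by
        intro a ha
        obtain ⟨i, hi, rfl⟩ := List.mem_iff_getElem.mp ha
        have hiL : k - 1 + i < L.length := by
          rw [List.length_drop] at hi; omega
        rw [List.getElem_drop]
        have : L.get ⟨k - 1, hks⟩ ≤ L.get ⟨k - 1 + i, hiL⟩ := by
          apply hsorted.rel_get_of_le
          simp only [Fin.mk_le_mk]
          omega
        simp only [List.get_eq_getElem] at this
        exact lt_of_lt_of_le hcon this
      have hcnt : Multiset.countP (fun a => v < a) ((L.drop (k - 1) : List ℝ) : Multiset ℝ)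
          = Multiset.card ((L.drop (k - 1) : List ℝ) : Multiset ℝ) :=
        Multiset.countP_eq_card.mpr (by simpa using hall)
      have hlen' : Multiset.card ((L.drop (k - 1) : List ℝ) : Multiset ℝ) = K - (k - 1) := by
        rw [Multiset.coe_card, List.length_drop, hlen]
      calc K - (k - 1)
          = Multiset.countP (fun a => v < a) ((L.drop (k - 1) : List ℝ) : Multiset ℝ) := by
            rw [hcnt, hlen']
        _ ≤ Multiset.countP (fun a => v < a) M := Multiset.countP_le_of_le _ hsubl
    omega
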